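/- Let x_1,…,x_T ∈ ℝ^p with ‖x_t‖₂ ≤ L for all t, λ > 0, and A_t = λI + Σ_{s=1}^{t} x_s x_s⊤. Then Σ_{t=1}^{T} min{‖x_t‖²_{A_{t−1}⁻¹}, 1} ≤ 2 log(det(A_T)/det(λI)), where A_0 = λI and ‖x‖²_M = x⊤Mx. -/

import Mathlib

open Matrix

/-
Writing `u_t = x_tᵀ A_t⁻¹ x_t`, the matrix determinant lemma gives
`det A_{t+1} = det A_t (1 + u_t)`, so `∑ log (1 + u_t)` telescopes to `log (det A_T / det A_0)`.
It remains to note that `min u 1 ≤ 2 u / (1 + u) ≤ 2 log (1 + u)` for `u ≥ 0`.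
-/

theorem min_one_le_two_mul_log_one_add {u : ℝ} (hu : 0 ≤ u) :
    min u 1 ≤ 2 * Real.log (1 + u) := by
  have hpos : 0 < 1 + u := by linarith
  have hlog : 1 - (1 + u)⁻¹ ≤ Real.log (1 + u) := Real.one_sub_inv_le_log_of_pos hpos
  have hfrac : 1 - (1 + u)⁻¹ = u / (1 + u) := by field_simp; ring
  have hmin : min u 1 ≤ 2 * (u / (1 + u)) := by
    rw [mul_div_assoc', le_div_iff₀ hpos]
    rcases le_total u 1 with h | h
    · rw [min_eq_left h]; nlinarith
    · rw [min_eq_right h]; linarith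
  linarith

namespace Matrix

variable {n : Type*} [Fintype n]

theorem PosDef.add_vecMulVec_self {A : Matrix n n ℝ} (hA : A.PosDef) (v : n → ℝ) :
    (A + vecMulVec v v).PosDef := by
  simpa using hA.add_posSemidef (posSemidef_vecMulVec_self_star v)

variable [DecidableEq n]

theorem det_add_vecMulVec {R : Type*} [CommRing R] {A : Matrix n n R} (hA : IsUnit A.det)
    (u v : n → R) : (A + vecMulVec u v).det = A.det * (1 + v ⬝ᵥ A⁻¹ *ᵥ u) := by
  rw [vecMulVec_eq Unit, det_add_replicateCol_mul_replicateRow hA]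
  congr 1
  rw [Matrix.mul_assoc, ← replicateCol_mulVec, replicateRow_mul_replicateCol, det_unique]
  simp

theorem PosDef.dotProduct_inv_mulVec_nonneg {A : Matrix n n ℝ} (hA : A.PosDef) (v : n → ℝ) :
    0 ≤ v ⬝ᵥ A⁻¹ *ᵥ v := by
  simpa using hA.inv.posSemidef.dotProduct_mulVec_nonneg v

theorem PosDef.log_det_add_vecMulVec_self {A : Matrix n n ℝ} (hA : A.PosDef) (v : n → ℝ) :
    Real.log (A + vecMulVec v v).det = Real.log A.det + Real.log (1 + v ⬝ᵥ A⁻¹ *ᵥ v) := by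
  have hquad := hA.dotProduct_inv_mulVec_nonneg v
  rw [det_add_vecMulVec (isUnit_iff_ne_zero.mpr hA.det_pos.ne'),
    Real.log_mul hA.det_pos.ne' (by positivity)]

theorem sum_min_one_le_two_mul_log_det_div {A : ℕ → Matrix n n ℝ} {x : ℕ → n → ℝ}
    (hA₀ : (A 0).PosDef) (hA : ∀ t, A (t + 1) = A t + vecMulVec (x t) (x t)) (T : ℕ) :
    ∑ t ∈ Finset.range T, min (x t ⬝ᵥ (A t)⁻¹ *ᵥ x t) 1 ≤
      2 * Real.log ((A T).det / (A 0).det) := by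
  have hpd : ∀ t, (A t).PosDef := by
    intro t
    induction t with
    | zero => exact hA₀
    | succ t ih => rw [hA t]; exact ih.add_vecMulVec_self (x t)
  calc ∑ t ∈ Finset.range T, min (x t ⬝ᵥ (A t)⁻¹ *ᵥ x t) 1
      ≤ ∑ t ∈ Finset.range T, 2 * Real.log (1 + x t ⬝ᵥ (A t)⁻¹ *ᵥ x t) :=
        Finset.sum_le_sum fun t _ =>
          min_one_le_two_mul_log_one_add ((hpd t).dotProduct_inv_mulVec_nonneg (x t))
    _ = 2 * ∑ t ∈ Finset.range T, (Real.log (A (t + 1)).det - Real.log (A t).det) := by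
        rw [Finset.mul_sum]
        refine Finset.sum_congr rfl fun t _ => ?_
        rw [hA t, (hpd t).log_det_add_vecMulVec_self]
        ring
    _ = 2 * Real.log ((A T).det / (A 0).det) := by
        rw [Finset.sum_range_sub (fun t => Real.log (A t).det),
          Real.log_div (hpd T).det_pos.ne' hA₀.det_pos.ne']

end Matrix

theorem elliptical_potential_general (p T : ℕ) (lam : ℝ) (hlam : 0 < lam)
    (x : ℕ → Fin p → ℝ)
    (A : ℕ → Matrix (Fin p) (Fin p) ℝ)
    (hA : ∀ t, A t = lam • 1 + ∑ s ∈ Finset.range t, Matrix.vecMulVec (x s) (x s)) :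
    ∑ t ∈ Finset.range T, min (x t ⬝ᵥ (A t)⁻¹ *ᵥ x t) 1 ≤
      2 * Real.log ((A T).det / (lam • (1 : Matrix (Fin p) (Fin p) ℝ)).det) := by
  have hA₀ : A 0 = lam • 1 := by simp [hA 0]
  have hstep : ∀ t, A (t + 1) = A t + vecMulVec (x t) (x t) := fun t => by
    rw [hA, hA, Finset.sum_range_succ, add_assoc]
  rw [← hA₀]
  exact sum_min_one_le_two_mul_log_det_div (hA₀ ▸ PosDef.one.smul hlam) hstep T

/-- Elliptical potential lemma: with A_t = λI + Σ_{s<t} x_s x_sᵀ and ‖x_t‖₂ ≤ L,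
    Σ_{t<T} min(‖x_t‖²_{A_t⁻¹}, 1) ≤ 2 log(det A_T / det(λI)). -/
theorem elliptical_potential (p T : ℕ) (lam L : ℝ) (hlam : 0 < lam)
    (x : ℕ → Fin p → ℝ) (hx : ∀ t, Real.sqrt (x t ⬝ᵥ x t) ≤ L)
    (A : ℕ → Matrix (Fin p) (Fin p) ℝ)
    (hA : ∀ t, A t = lam • 1 + ∑ s ∈ Finset.range t, Matrix.vecMulVec (x s) (x s)) :
    ∑ t ∈ Finset.range T, min (x t ⬝ᵥ (A t)⁻¹ *ᵥ x t) 1 ≤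
      2 * Real.log ((A T).det / (lam • (1 : Matrix (Fin p) (Fin p) ℝ)).det) :=
  elliptical_potential_general p T lam hlam x A hA
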